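/- Let G be a topological group acting continuously by isometries on a complete CAT(0) space X, and suppose the action is weakly evanescent. If either (i) X is proper (closed balls are compact), or (ii) there exists a countable increasing sequence of compact subsets of G that is cofinal among compact subsets of G (every compact subset of G is contained in one of them), then the action is evanescent. -/

import Mathlib

/-- A map `σ : ℝ → X` is a geodesic (isometric) on the interval `[a, b]`. -/
def IsGeodesicOn {X : Type*} [MetricSpace X] (σ : ℝ → X) (a b : ℝ) : Prop :=
  ∀ s ∈ Set.Icc a b, ∀ t ∈ Set.Icc a b, dist (σ s) (σ t) = |s - t|

/-- A geodesic metric space: any two points are joined by a geodesic segment. -/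
def IsGeodesicSpace (X : Type*) [MetricSpace X] : Prop :=
  ∀ x y : X, ∃ σ : ℝ → X, IsGeodesicOn σ 0 (dist x y) ∧ σ 0 = x ∧ σ (dist x y) = y

/-- A CAT(0) space: a geodesic space satisfying the CN inequality of Bruhat–Tits
for all (metric) midpoints. -/
def IsCAT0 (X : Type*) [MetricSpace X] : Prop :=
  IsGeodesicSpace X ∧
    ∀ x c c' m : X, dist m c = dist c c' / 2 → dist m c' = dist c c' / 2 →
      2 * dist m x ^ 2 ≤ dist c' x ^ 2 + dist c x ^ 2 - dist c' c ^ 2 / 2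

/-- A subset of a metric space is (geodesically) convex if it contains every geodesic
segment joining any two of its points. -/
def GConvex {X : Type*} [MetricSpace X] (A : Set X) : Prop :=
  ∀ (σ : ℝ → X) (a b : ℝ), a ≤ b → IsGeodesicOn σ a b → σ a ∈ A → σ b ∈ A →
    ∀ t ∈ Set.Icc a b, σ t ∈ A

/-- `ρ` is an action of the group `G` on `X` by isometries. -/
def IsIsometricAction {G X : Type*} [Group G] [MetricSpace X] (ρ : G → X → X) : Prop :=
  (∀ x, ρ 1 x = x) ∧ (∀ g h x, ρ (g * h) x = ρ g (ρ h x)) ∧ ∀ g : G, Isometry (ρ g)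

/-- A subset `T ⊆ X` is `Q`-evanescent: the set of displacements `d(g x, x)`,
`g ∈ Q`, `x ∈ T`, is bounded. -/
def QEvanescent {G X : Type*} [MetricSpace X] (ρ : G → X → X) (Q : Set G) (T : Set X) : Prop :=
  ∃ C : ℝ, ∀ g ∈ Q, ∀ x ∈ T, dist (ρ g x) x ≤ C

/-- The action is evanescent: there is an unbounded set which is `Q`-evanescent
for every compact `Q ⊆ G`. -/
def Evanescent {G X : Type*} [TopologicalSpace G] [MetricSpace X] (ρ : G → X → X) : Prop :=
  ∃ T : Set X, ¬ Bornology.IsBounded T ∧ ∀ Q : Set G, IsCompact Q → QEvanescent ρ Q T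

/-- The action is weakly evanescent: for every compact `Q ⊆ G` there is an unbounded
`Q`-evanescent set. -/
def WeaklyEvanescent {G X : Type*} [TopologicalSpace G] [MetricSpace X] (ρ : G → X → X) : Prop :=
  ∀ Q : Set G, IsCompact Q → ∃ T : Set X, ¬ Bornology.IsBounded T ∧ QEvanescent ρ Q T

/-!
Along a geodesic `σ` of a CAT(0) space, the displacement `t ↦ d(g σ(t), σ(t))` of an isometry `g`
is convex. Fix a base point `x₀` and a compact `Q ⊆ G`. An unbounded `Q`-evanescent set with
displacement bound `C` contains points `x` arbitrarily far from `x₀`; on the geodesic from `x₀` to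
`x`, the point at distance `R` from `x₀` is displaced by each `g ∈ Q` by at most
`d(g x₀, x₀) + (R / d(x₀, x)) C ≤ d(g x₀, x₀) + 1`. So for every `n` there is `yₙ` on the sphere
of radius `n` about `x₀` obeying this bound on `Q`. If `X` is proper, the spheres are compact and
the finite intersection property gives one `yₙ` obeying it for all of `G`; given a cofinal sequence
`Qₙ`, choose `yₙ` for `Qₙ`. Either way `{yₙ}` is unbounded, and it is evanescent because
`g ↦ d(g x₀, x₀)` is bounded on compact sets.
-/

open Set Filter

theorem nonpos_of_midpoint_le {f : ℝ → ℝ} {a b : ℝ} (hf : ContinuousOn f (Icc a b))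
    (hmid : ∀ s ∈ Icc a b, ∀ u ∈ Icc a b, f ((s + u) / 2) ≤ (f s + f u) / 2)
    (ha : f a ≤ 0) (hb : f b ≤ 0) : ∀ t ∈ Icc a b, f t ≤ 0 := by
  intro t ht
  obtain ⟨t₀, ht₀, hmax⟩ := isCompact_Icc.exists_isMaxOn ⟨t, ht⟩ hf
  refine (hmax ht).trans ?_
  -- Reflect the maximum point about its nearer endpoint: midpoint convexity then bounds
  -- `f t₀` by the value at that endpoint.
  obtain ⟨ε, hεa, hεb, hε⟩ : ∃ ε, ε ≤ t₀ - a ∧ ε ≤ b - t₀ ∧ (ε = t₀ - a ∨ ε = b - t₀) :=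
    ⟨_, min_le_left _ _, min_le_right _ _, min_choice _ _⟩
  have hε0 : 0 ≤ ε := by rcases hε with h | h <;> linarith [ht₀.1, ht₀.2]
  have hlo : t₀ - ε ∈ Icc a b := ⟨by linarith, by linarith [ht₀.2]⟩
  have hhi : t₀ + ε ∈ Icc a b := ⟨by linarith [ht₀.1], by linarith⟩
  have hconv := hmid _ hlo _ hhi
  rw [show (t₀ - ε + (t₀ + ε)) / 2 = t₀ by ring] at hconv
  have hhi' : f (t₀ + ε) ≤ f t₀ := hmax hhi
  have hlo' : f (t₀ - ε) ≤ f t₀ := hmax hlo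
  rcases hε with rfl | rfl
  · rw [sub_sub_cancel] at hconv
    linarith
  · rw [add_sub_cancel] at hconv
    linarith

theorem convexOn_of_midpoint_le {s : Set ℝ} {f : ℝ → ℝ} (hs : Convex ℝ s)
    (hf : ContinuousOn f s) (hmid : ∀ x ∈ s, ∀ y ∈ s, f ((x + y) / 2) ≤ (f x + f y) / 2) :
    ConvexOn ℝ s f := by
  refine LinearOrder.convexOn_of_lt hs fun x hx y hy hxy a b ha hb hab => ?_
  have hxy' : y - x ≠ 0 := sub_ne_zero.2 hxy.ne'
  have hsub : Icc x y ⊆ s := hs.ordConnected.out hx hy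
  set chord : ℝ → ℝ := fun t => ((y - t) * f x + (t - x) * f y) / (y - x)
  have hbelow := nonpos_of_midpoint_le (f := fun t => f t - chord t) (a := x) (b := y)
    ((hf.mono hsub).sub (by fun_prop))
    (fun u hu v hv => by
      have := hmid u (hsub hu) v (hsub hv)
      simp only [chord]
      linarith [show ((y - (u + v) / 2) * f x + ((u + v) / 2 - x) * f y) / (y - x) =
        (((y - u) * f x + (u - x) * f y) / (y - x) + ((y - v) * f x + (v - x) * f y) / (y - x))
          / 2 by ring])
    (by simp [chord, hxy']) (by simp [chord, hxy'])
    (a • x + b • y) (segment_eq_Icc hxy.le ▸ ⟨a, b, ha.le, hb.le, hab, rfl⟩)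
  have hchord : chord (a • x + b • y) = a • f x + b • f y := by
    simp only [chord, smul_eq_mul]
    rw [show y - (a * x + b * y) = a * (y - x) by linear_combination (-y) * hab,
      show a * x + b * y - x = b * (y - x) by linear_combination x * hab]
    field_simp
  linarith

section Geodesic

variable {X : Type*} [MetricSpace X]

def IsMetricMidpoint (m x y : X) : Prop :=
  dist m x = dist x y / 2 ∧ dist m y = dist x y / 2

theorem IsMetricMidpoint.symm {m x y : X} (h : IsMetricMidpoint m x y) :
    IsMetricMidpoint m y x := by
  rw [IsMetricMidpoint, dist_comm y x]
  exact ⟨h.2, h.1⟩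

theorem IsGeodesicOn.isMetricMidpoint {σ : ℝ → X} {a b s u : ℝ} (hσ : IsGeodesicOn σ a b)
    (hs : s ∈ Icc a b) (hu : u ∈ Icc a b) :
    IsMetricMidpoint (σ ((s + u) / 2)) (σ s) (σ u) := by
  have hm : (s + u) / 2 ∈ Icc a b := ⟨by linarith [hs.1, hu.1], by linarith [hs.2, hu.2]⟩
  rw [IsMetricMidpoint, hσ _ hm _ hs, hσ _ hm _ hu, hσ _ hs _ hu,
    show (s + u) / 2 - s = -(s - u) / 2 by ring, show (s + u) / 2 - u = (s - u) / 2 by ring,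
    abs_div, abs_div, abs_neg, abs_two]
  exact ⟨rfl, rfl⟩

theorem IsGeodesicOn.continuousOn {σ : ℝ → X} {a b : ℝ} (hσ : IsGeodesicOn σ a b) :
    ContinuousOn σ (Icc a b) :=
  (LipschitzOnWith.of_dist_le_mul fun s hs u hu => by
    rw [hσ s hs u hu, NNReal.coe_one, one_mul, Real.dist_eq]).continuousOn

theorem Isometry.isGeodesicOn_comp {Y : Type*} [MetricSpace Y] {φ : X → Y} (hφ : Isometry φ)
    {σ : ℝ → X} {a b : ℝ} (hσ : IsGeodesicOn σ a b) : IsGeodesicOn (φ ∘ σ) a b :=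
  fun s hs u hu => (hφ.dist_eq _ _).trans (hσ s hs u hu)

end Geodesic

theorem exists_lt_dist_of_not_isBounded {X : Type*} [MetricSpace X] {T : Set X}
    (hT : ¬Bornology.IsBounded T) (x₀ : X) (r : ℝ) : ∃ x ∈ T, r < dist x₀ x := by
  by_contra! h
  exact hT ((Metric.isBounded_closedBall (x := x₀) (r := r)).subset fun x hx => by
    rw [Metric.mem_closedBall, dist_comm]
    exact h x hx)

namespace IsCAT0

variable {X : Type*} [MetricSpace X]

theorem exists_isMetricMidpoint (hX : IsCAT0 X) (x y : X) : ∃ m : X, IsMetricMidpoint m x y := by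
  obtain ⟨σ, hσ, hσ0, hσ1⟩ := hX.1 x y
  have hd : (0 : ℝ) ≤ dist x y := dist_nonneg
  refine ⟨σ ((0 + dist x y) / 2), ?_⟩
  simpa only [hσ0, hσ1] using hσ.isMetricMidpoint ⟨le_rfl, hd⟩ ⟨hd, le_rfl⟩

theorem dist_le_half_of_isMetricMidpoint (hX : IsCAT0 X) {x₁ x₂ y m₁ m₂ : X}
    (h₁ : IsMetricMidpoint m₁ x₁ y) (h₂ : IsMetricMidpoint m₂ x₂ y) :
    dist m₁ m₂ ≤ dist x₁ x₂ / 2 := by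
  have cn₂ := hX.2 m₁ x₂ y m₂ h₂.1 h₂.2
  have cn₁ := hX.2 x₂ x₁ y m₁ h₁.1 h₁.2
  rw [dist_comm y m₁, h₁.2, dist_comm x₂ m₁, dist_comm m₂ m₁, dist_comm y x₂] at cn₂
  rw [dist_comm y x₂, dist_comm y x₁] at cn₁
  have hsq : dist m₁ m₂ ^ 2 ≤ (dist x₁ x₂ / 2) ^ 2 := by linarith
  exact (pow_le_pow_iff_left₀ dist_nonneg (by positivity) two_ne_zero).1 hsq

theorem dist_le_of_isMetricMidpoint (hX : IsCAT0 X) {x₁ y₁ x₂ y₂ m₁ m₂ : X}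
    (h₁ : IsMetricMidpoint m₁ x₁ y₁) (h₂ : IsMetricMidpoint m₂ x₂ y₂) :
    dist m₁ m₂ ≤ (dist x₁ x₂ + dist y₁ y₂) / 2 := by
  obtain ⟨m, hm⟩ := hX.exists_isMetricMidpoint x₂ y₁
  calc dist m₁ m₂ ≤ dist m₁ m + dist m m₂ := dist_triangle _ _ _
    _ ≤ dist x₁ x₂ / 2 + dist y₁ y₂ / 2 :=
      add_le_add (hX.dist_le_half_of_isMetricMidpoint h₁ hm)
        (hX.dist_le_half_of_isMetricMidpoint hm.symm h₂.symm)
    _ = (dist x₁ x₂ + dist y₁ y₂) / 2 := by ring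

theorem convexOn_dist_of_isGeodesicOn (hX : IsCAT0 X) {σ τ : ℝ → X} {a b : ℝ}
    (hσ : IsGeodesicOn σ a b) (hτ : IsGeodesicOn τ a b) :
    ConvexOn ℝ (Icc a b) fun t => dist (σ t) (τ t) :=
  convexOn_of_midpoint_le (convex_Icc a b)
    (continuous_dist.comp_continuousOn (hσ.continuousOn.prodMk hτ.continuousOn))
    fun _ hs _ hu => hX.dist_le_of_isMetricMidpoint (hσ.isMetricMidpoint hs hu)
      (hτ.isMetricMidpoint hs hu)

theorem exists_dist_eq_forall_isometry_dist_le (hX : IsCAT0 X) {x₀ x : X} {R : ℝ}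
    (hR : 0 ≤ R) (hRx : R ≤ dist x₀ x) :
    ∃ y, dist y x₀ = R ∧ ∀ φ : X → X, Isometry φ →
      dist (φ y) y ≤ dist (φ x₀) x₀ + R / dist x₀ x * dist (φ x) x := by
  obtain ⟨σ, hσ, hσ0, hσL⟩ := hX.1 x₀ x
  set L := dist x₀ x
  have hL : 0 ≤ L := dist_nonneg
  have hRL : R / L ≤ 1 := div_le_one_of_le₀ hRx hL
  have hpt : (1 - R / L) * 0 + R / L * L = R := by
    rcases eq_or_ne L 0 with h | h
    · simp [h, le_antisymm (h ▸ hRx) hR]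
    · simp [div_mul_cancel₀ R h]
  refine ⟨σ R, ?_, fun φ hφ => ?_⟩
  · simpa [hσ0, abs_of_nonneg hR] using hσ R ⟨hR, hRx⟩ 0 ⟨le_rfl, hL⟩
  have hconv := (hX.convexOn_dist_of_isGeodesicOn (hφ.isGeodesicOn_comp hσ) hσ).2
    (left_mem_Icc.2 hL) (right_mem_Icc.2 hL) (sub_nonneg.2 hRL) (div_nonneg hR hL)
    (sub_add_cancel 1 _)
  simp only [smul_eq_mul, hpt, Function.comp_apply, hσ0, hσL] at hconv
  have : (1 - R / L) * dist (φ x₀) x₀ ≤ dist (φ x₀) x₀ :=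
    mul_le_of_le_one_left dist_nonneg (by linarith [div_nonneg hR hL])
  linarith

theorem exists_dist_eq_forall_dist_le_of_qEvanescent {G : Type*} (hX : IsCAT0 X)
    {ρ : G → X → X} (hiso : ∀ g, Isometry (ρ g)) {Q : Set G} {T : Set X}
    (hT : ¬Bornology.IsBounded T) (hQT : QEvanescent ρ Q T) (x₀ : X) {R : ℝ} (hR : 0 ≤ R) :
    ∃ y, dist y x₀ = R ∧ ∀ g ∈ Q, dist (ρ g y) y ≤ dist (ρ g x₀) x₀ + 1 := by
  obtain ⟨C, hC⟩ := hQT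
  obtain ⟨x, hxT, hfar⟩ := exists_lt_dist_of_not_isBounded hT x₀ (R * (|C| + 1))
  set L := dist x₀ x
  have hRL : R ≤ L := by nlinarith [abs_nonneg C]
  have hL : 0 < L := by nlinarith [abs_nonneg C]
  obtain ⟨y, hy, hdisp⟩ := hX.exists_dist_eq_forall_isometry_dist_le hR hRL
  refine ⟨y, hy, fun g hg => (hdisp _ (hiso g)).trans ?_⟩
  have hscaled : R / L * dist (ρ g x) x ≤ 1 :=
    calc R / L * dist (ρ g x) x ≤ R / L * |C| := by
          gcongr
          exact (hC g hg x hxT).trans (le_abs_self C)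
      _ ≤ 1 := by
          rw [div_mul_eq_mul_div, div_le_one hL]
          nlinarith
  linarith

end IsCAT0

section Evanescence

variable {G X : Type*} [MetricSpace X]

theorem exists_forall_dist_le_of_properSpace [ProperSpace X] {ρ : G → X → X}
    (hcont : ∀ g, Continuous (ρ g)) (x₀ : X) (R : ℝ) (bound : G → ℝ)
    (h : ∀ u : Finset G, ∃ y, dist y x₀ = R ∧ ∀ g ∈ u, dist (ρ g y) y ≤ bound g) :
    ∃ y, dist y x₀ = R ∧ ∀ g, dist (ρ g y) y ≤ bound g := by
  obtain ⟨y, hyR, hy⟩ := (isCompact_sphere x₀ R).inter_iInter_nonempty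
    (fun g => {y | dist (ρ g y) y ≤ bound g})
    (fun g => isClosed_le ((hcont g).dist continuous_id) continuous_const) fun u => by
      obtain ⟨y, hyR, hy⟩ := h u
      exact ⟨y, hyR, mem_iInter₂.2 hy⟩
  exact ⟨y, hyR, mem_iInter.1 hy⟩

theorem not_isBounded_range_of_dist_eq {y : ℕ → X} {x₀ : X} (hy : ∀ n, dist (y n) x₀ = n) :
    ¬Bornology.IsBounded (range y) := by
  intro hb
  obtain ⟨r, hr⟩ := hb.subset_closedBall x₀
  have hmem := hr (mem_range_self (⌈r⌉₊ + 1))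
  rw [Metric.mem_closedBall, hy] at hmem
  push_cast at hmem
  linarith [Nat.le_ceil r]

theorem Isometry.dist_apply_self_le {φ : X → X} (hφ : Isometry φ) (x y : X) :
    dist (φ y) y ≤ dist (φ x) x + 2 * dist y x :=
  calc dist (φ y) y ≤ dist (φ y) (φ x) + dist (φ x) x + dist x y := dist_triangle4 _ _ _ _
    _ = dist (φ x) x + 2 * dist y x := by rw [hφ.dist_eq, dist_comm x y]; ring

theorem evanescent_of_eventually_dist_le [TopologicalSpace G] {ρ : G → X → X}
    (hiso : ∀ g, Isometry (ρ g)) {x₀ : X} (hcont : Continuous fun g => ρ g x₀) (y : ℕ → X)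
    (hy : ∀ n, dist (y n) x₀ = n)
    (hev : ∀ K : Set G, IsCompact K →
      ∀ᶠ n in atTop, ∀ g ∈ K, dist (ρ g (y n)) (y n) ≤ dist (ρ g x₀) x₀ + 1) :
    Evanescent ρ := by
  refine ⟨range y, not_isBounded_range_of_dist_eq hy, fun K hK => ?_⟩
  obtain ⟨A, hA⟩ := hK.bddAbove_image (hcont.dist continuous_const).continuousOn
  obtain ⟨m, hm⟩ := eventually_atTop.1 (hev K hK)
  refine ⟨A + 1 + 2 * m, ?_⟩
  rintro g hg _ ⟨n, rfl⟩
  have hgA : dist (ρ g x₀) x₀ ≤ A := hA (mem_image_of_mem _ hg)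
  rcases le_or_gt m n with hmn | hnm
  · linarith [hm n hmn g hg, (Nat.cast_nonneg m : (0 : ℝ) ≤ m)]
  · have hnm' : (n : ℝ) ≤ m := by exact_mod_cast hnm.le
    linarith [(hiso g).dist_apply_self_le x₀ (y n), hy n]

end Evanescence

theorem evanescent_of_weaklyEvanescent_general
    {G : Type*} [Group G] [TopologicalSpace G]
    {X : Type*} [MetricSpace X] (hX : IsCAT0 X)
    (ρ : G → X → X) (hact : IsIsometricAction ρ)
    (hcont : Continuous fun p : G × X => ρ p.1 p.2)
    (hweak : WeaklyEvanescent ρ)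
    (hcase : ProperSpace X ∨
      ∃ Q : ℕ → Set G, (∀ n, IsCompact (Q n)) ∧ Monotone Q ∧
        ∀ K : Set G, IsCompact K → ∃ n, K ⊆ Q n) :
    Evanescent ρ := by
  have hiso := hact.2.2
  obtain ⟨T₀, hT₀, -⟩ := hweak ∅ isCompact_empty
  obtain ⟨x₀, -⟩ := Bornology.nonempty_of_not_isBounded hT₀
  have hsphere (Q : Set G) (hQ : IsCompact Q) (n : ℕ) :
      ∃ y, dist y x₀ = n ∧ ∀ g ∈ Q, dist (ρ g y) y ≤ dist (ρ g x₀) x₀ + 1 := by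
    obtain ⟨T, hT, hQT⟩ := hweak Q hQ
    exact hX.exists_dist_eq_forall_dist_le_of_qEvanescent hiso hT hQT x₀ n.cast_nonneg
  have horbit : Continuous fun g => ρ g x₀ := hcont.comp (.prodMk_left x₀)
  rcases hcase with hproper | ⟨Q, hQ, hmono, hcofinal⟩
  · choose y hy hdisp using fun n : ℕ => exists_forall_dist_le_of_properSpace
      (fun g => (hiso g).continuous) x₀ n _ fun u => hsphere u u.finite_toSet.isCompact n
    exact evanescent_of_eventually_dist_le hiso horbit y hy fun _ _ =>
      .of_forall fun n g _ => hdisp n g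
  · choose y hy hdisp using fun n => hsphere (Q n) (hQ n) n
    refine evanescent_of_eventually_dist_le hiso horbit y hy fun K hK => ?_
    obtain ⟨m, hm⟩ := hcofinal K hK
    exact eventually_atTop.2 ⟨m, fun n hn g hg => hdisp n g (hmono hn (hm hg))⟩

/-- Monod, Proposition: weak evanescence implies evanescence if either (i) `X` is proper, or
(ii) the compact subsets of `G` admit a countable increasing cofinal sequence. -/
theorem evanescent_of_weaklyEvanescent
    {G : Type*} [Group G] [TopologicalSpace G] [IsTopologicalGroup G]
    {X : Type*} [MetricSpace X] [CompleteSpace X] (hX : IsCAT0 X)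
    (ρ : G → X → X) (hact : IsIsometricAction ρ)
    (hcont : Continuous fun p : G × X => ρ p.1 p.2)
    (hweak : WeaklyEvanescent ρ)
    (hcase : ProperSpace X ∨
      ∃ Q : ℕ → Set G, (∀ n, IsCompact (Q n)) ∧ Monotone Q ∧
        ∀ K : Set G, IsCompact K → ∃ n, K ⊆ Q n) :
    Evanescent ρ :=
  evanescent_of_weaklyEvanescent_general hX ρ hact hcont hweak hcase
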